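/- Let m ∈ ℕ, (c₁, c₂) ∈ ℂ² with (c₁,c₂) ≠ (0,0), μ ∈ ℂ with μ ≠ 0, and λ₀, …, λ_m ∈ ℂ; define gᵢ(r) := Σ_{j=i}^{m} (λⱼ/(j−i+1))·C(j, j−i)·r^{j−i+1} for 0 ≤ i ≤ m. Then the map (t₁,t₂)·(x,y) = (x + Σ_{i=0}^{m} gᵢ(c₁t₁ + c₂t₂)·yⁱ + μ(c̄₂t₁ − c̄₁t₂) , y + c₁t₁ + c₂t₂), where c̄₁, c̄₂ are the complex conjugates of c₁, c₂, defines a simply transitive action of the additive group (ℂ², +) on ℂ²; that is, it is an action, and for all P, Q ∈ ℂ² there is a unique (t₁,t₂) ∈ ℂ² with (t₁,t₂)·P = Q. -/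

import Mathlib

open Finset

/-- `gfun m l i r = ∑_{j=i}^{m} (l j/(j-i+1)) * C(j, j-i) * r^(j-i+1)`. -/
noncomputable def gfun (m : ℕ) (l : ℕ → ℂ) (i : ℕ) (r : ℂ) : ℂ :=
  ∑ j ∈ Finset.Icc i m, (l j / ((j - i + 1 : ℕ) : ℂ)) * ((j.choose (j - i) : ℕ) : ℂ) * r ^ (j - i + 1)

/-- A (left) action of the additive group `(ℂ², +)` on `ℂ²`. -/
def IsAction (Φ : (ℂ × ℂ) → (ℂ × ℂ) → ℂ × ℂ) : Prop :=
  (∀ z, Φ (0, 0) z = z) ∧ ∀ t t' z, Φ (t + t') z = Φ t (Φ t' z)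

/-- The map `(t₁,t₂)·(x,y) = (x + Σᵢ gᵢ(c₁t₁+c₂t₂) yⁱ + μ(c̄₂t₁-c̄₁t₂), y + c₁t₁+c₂t₂)`. -/
noncomputable def PhiG (m : ℕ) (l : ℕ → ℂ) (c₁ c₂ μ : ℂ) (t z : ℂ × ℂ) : ℂ × ℂ :=
  (z.1 + ∑ i ∈ Finset.range (m + 1), gfun m l i (c₁ * t.1 + c₂ * t.2) * z.2 ^ i +
      μ * ((starRingEnd ℂ) c₂ * t.1 - (starRingEnd ℂ) c₁ * t.2),
   z.2 + c₁ * t.1 + c₂ * t.2)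

/-!
Write `s(t) = c₁t₁ + c₂t₂`, `σ(t) = c̄₂t₁ - c̄₁t₂` and let `F(y) = Σⱼ λⱼ/(j+1) · y^(j+1)`, the
antiderivative of `Σⱼ λⱼ yʲ`. The binomial theorem gives `Σᵢ gᵢ(r) yⁱ = F(y + r) - F(y)`, so the
shear `ψ(x, y) = (x - F(y), y)` conjugates the map to the translation by `L(t) = (μ σ(t), s(t))`.
The linear map `L` is invertible, since `c̄₁ s + c₂ σ = (|c₁|² + |c₂|²) t₁` and
`c̄₂ s - c₁ σ = (|c₁|² + |c₂|²) t₂`.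
-/

section ConjugateTranslation

variable {A : Type*} [AddCommGroup A]

def shearEquiv {B : Type*} (f : B → A) : A × B ≃ A × B where
  toFun z := (z.1 - f z.2, z.2)
  invFun z := (z.1 + f z.2, z.2)
  left_inv z := by simp
  right_inv z := by simp

theorem isAction_conj_translate (ψ : ℂ × ℂ ≃ ℂ × ℂ) (L : ℂ × ℂ →+ ℂ × ℂ) :
    IsAction fun t z ↦ ψ.symm (ψ z + L t) := by
  refine ⟨fun z ↦ ?_, fun t t' z ↦ ?_⟩
  · simp [← Prod.zero_eq_mk]
  · simp [map_add, add_assoc, add_comm (L t)]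

theorem existsUnique_conj_translate_eq {T : Type*} (ψ : A ≃ A) (L : T → A)
    (hL : Function.Bijective L) (P Q : A) : ∃! t, ψ.symm (ψ P + L t) = Q := by
  simp_rw [Equiv.symm_apply_eq, ← eq_sub_iff_add_eq']
  exact hL.existsUnique _

end ConjugateTranslation

section Antiderivative

theorem choose_sub_div_eq {K : Type*} [Field K] [CharZero K] {i j : ℕ} (hij : i ≤ j) :
    ((j.choose (j - i) : ℕ) : K) / ((j - i + 1 : ℕ) : K) =
      ((j + 1).choose i : ℕ) / ((j + 1 : ℕ) : K) := by
  have key : (j + 1) * j.choose (j - i) = (j + 1).choose i * (j - i + 1) := by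
    rw [Nat.add_one_mul_choose_eq, show j - i + 1 = j + 1 - i by omega,
      Nat.choose_symm (n := j + 1) (by omega)]
  rw [div_eq_div_iff (by exact_mod_cast (j - i).succ_ne_zero) (by exact_mod_cast j.succ_ne_zero),
    mul_comm]
  exact_mod_cast key

/-- The `j`-th layer of `Σᵢ gᵢ(r) yⁱ`. -/
theorem sum_range_choose_sub_mul_pow {K : Type*} [Field K] [CharZero K] (a r y : K) (j : ℕ) :
    ∑ i ∈ range (j + 1), a / ((j - i + 1 : ℕ) : K) * ((j.choose (j - i) : ℕ) : K) *
        r ^ (j - i + 1) * y ^ i =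
      a / ((j + 1 : ℕ) : K) * ((y + r) ^ (j + 1) - y ^ (j + 1)) := by
  conv_rhs => rw [add_pow, sum_range_succ, Nat.sub_self, pow_zero, Nat.choose_self, Nat.cast_one,
    mul_one, mul_one, add_sub_cancel_right, mul_sum]
  refine sum_congr rfl fun i hi ↦ ?_
  have hij : i ≤ j := Nat.lt_succ_iff.mp (mem_range.mp hi)
  have hcoeff := choose_sub_div_eq (K := K) hij
  rw [show j + 1 - i = j - i + 1 by omega]
  linear_combination a * r ^ (j - i + 1) * y ^ i * hcoeff

noncomputable def antideriv (m : ℕ) (l : ℕ → ℂ) (y : ℂ) : ℂ :=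
  ∑ j ∈ range (m + 1), l j / ((j + 1 : ℕ) : ℂ) * y ^ (j + 1)

theorem sum_gfun_mul_pow (m : ℕ) (l : ℕ → ℂ) (r y : ℂ) :
    ∑ i ∈ range (m + 1), gfun m l i r * y ^ i = antideriv m l (y + r) - antideriv m l y := by
  simp only [gfun, sum_mul]
  rw [sum_comm' (t' := range (m + 1)) (s' := fun j ↦ range (j + 1))]
  · simp only [antideriv, ← sum_sub_distrib, ← mul_sub, sum_range_choose_sub_mul_pow]
  · intro i j
    simp only [mem_range, mem_Icc]
    omega

end Antiderivative

section Translation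

open ComplexConjugate

theorem mul_conj_add_mul_conj_ne_zero {c₁ c₂ : ℂ} (hc : (c₁, c₂) ≠ (0, 0)) :
    c₁ * conj c₁ + c₂ * conj c₂ ≠ 0 := by
  rw [Complex.mul_conj, Complex.mul_conj, ← Complex.ofReal_add, Ne, Complex.ofReal_eq_zero,
    add_eq_zero_iff_of_nonneg (Complex.normSq_nonneg _) (Complex.normSq_nonneg _)]
  simpa [Complex.normSq_eq_zero] using hc

noncomputable def translationPart (c₁ c₂ μ : ℂ) : ℂ × ℂ →ₗ[ℂ] ℂ × ℂ where
  toFun t := (μ * (conj c₂ * t.1 - conj c₁ * t.2), c₁ * t.1 + c₂ * t.2)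
  map_add' t t' := by ext <;> simp <;> ring
  map_smul' a t := by ext <;> simp <;> ring

theorem translationPart_injective {c₁ c₂ μ : ℂ} (hc : (c₁, c₂) ≠ (0, 0)) (hμ : μ ≠ 0) :
    Function.Injective (translationPart c₁ c₂ μ) := by
  rw [← LinearMap.ker_eq_bot, LinearMap.ker_eq_bot']
  rintro ⟨t₁, t₂⟩ ht
  simp only [translationPart, LinearMap.coe_mk, AddHom.coe_mk, Prod.mk_eq_zero,
    mul_eq_zero, hμ, false_or] at ht
  obtain ⟨hσ, hs⟩ := ht
  have hN := mul_conj_add_mul_conj_ne_zero hc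
  have h₁ : (c₁ * conj c₁ + c₂ * conj c₂) * t₁ = 0 := by
    linear_combination conj c₁ * hs + c₂ * hσ
  have h₂ : (c₁ * conj c₁ + c₂ * conj c₂) * t₂ = 0 := by
    linear_combination conj c₂ * hs - c₁ * hσ
  simp [(mul_eq_zero.mp h₁).resolve_left hN, (mul_eq_zero.mp h₂).resolve_left hN]

theorem translationPart_bijective {c₁ c₂ μ : ℂ} (hc : (c₁, c₂) ≠ (0, 0)) (hμ : μ ≠ 0) :
    Function.Bijective (translationPart c₁ c₂ μ) :=
  have h := translationPart_injective hc hμ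
  ⟨h, LinearMap.injective_iff_surjective.mp h⟩

theorem phiG_eq_conj_translate (m : ℕ) (l : ℕ → ℂ) (c₁ c₂ μ : ℂ) :
    PhiG m l c₁ c₂ μ = fun t z ↦ (shearEquiv (antideriv m l)).symm
      (shearEquiv (antideriv m l) z + translationPart c₁ c₂ μ t) := by
  funext t z
  rw [Equiv.eq_symm_apply]
  simp only [PhiG, shearEquiv, translationPart, sum_gfun_mul_pow, Equiv.coe_fn_mk,
    LinearMap.coe_mk, AddHom.coe_mk, Prod.mk_add_mk]
  ext <;> ring_nf

end Translation

/-- the map above defines a simply transitive action of `(ℂ², +)` on `ℂ²`. -/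
theorem action_simply_transitive (m : ℕ) (c₁ c₂ : ℂ) (hc : (c₁, c₂) ≠ (0, 0))
    (μ : ℂ) (hμ : μ ≠ 0) (l : ℕ → ℂ) :
    IsAction (PhiG m l c₁ c₂ μ) ∧
      ∀ P Q : ℂ × ℂ, ∃! t : ℂ × ℂ, PhiG m l c₁ c₂ μ t P = Q := by
  rw [phiG_eq_conj_translate]
  exact ⟨isAction_conj_translate _ (translationPart c₁ c₂ μ).toAddMonoidHom,
    existsUnique_conj_translate_eq _ _ (translationPart_bijective hc hμ)⟩
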